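/- Let 0 ≤ β < 2, n ≥ 2, k ≥ 0, μ = (n-2+2k)/(2-β) and let K_μ(r,t) = ((2-β)t)^{-μ-1} exp(-r^{2-β}/((2-β)²t)) r^k. Then for 1 ≤ m ≤ ∞ and the measure dη(r) = r^{2k+n-1-β}dr on (0,∞), one has ‖K_μ(·,t)/r^k‖_{L^m(dη)} ≤ (2-β)^{((4k+2n-β-2)/((2-β)m)) - μ - 1} · m^{-(2k+n-β)/((2-β)m)} · Γ(μ+1)^{1/m} · t^{((2k+n-β)/(2-β))(1/m - 1)} for all t > 0. -/

import Mathlib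

/-!
After cancelling `r^k`, the kernel is `c · exp(-r^q / s)` with `q = 2 - β`, `s = q² t` and
`c = (q t)^(-μ-1)`. Its `L^∞` norm is at most `c`, and for finite `m` the `m`-th power of its norm
is `c^m ∫₀^∞ r^w exp(-(m/s) r^q) dr` with `w = 2k+n-1-β`, a Gamma integral evaluating to
`c^m (m/s)^{-(w+1)/q} Γ((w+1)/q) / q`; here `(w+1)/q = μ+1`, so the bound holds with equality.
-/

open MeasureTheory Real ENNReal Set

lemma ae_pos_withDensity_restrict_Ioi (f : ℝ → ℝ≥0∞) :
    ∀ᵐ r ∂((volume : Measure ℝ).restrict (Ioi 0)).withDensity f, 0 < r :=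
  (withDensity_absolutelyContinuous _ _).ae_le (ae_restrict_mem measurableSet_Ioi)

lemma eLpNorm_top_mul_exp_neg_rpow_div_le {c q s : ℝ} (hc : 0 ≤ c) (hs : 0 < s)
    (f : ℝ → ℝ≥0∞) :
    eLpNorm (fun r => c * exp (-(r ^ q / s))) ∞
        (((volume : Measure ℝ).restrict (Ioi 0)).withDensity f) ≤ ENNReal.ofReal c := by
  rw [eLpNorm_exponent_top]
  refine eLpNormEssSup_le_of_ae_bound ?_
  filter_upwards [ae_pos_withDensity_restrict_Ioi f] with r hr
  have hexp : exp (-(r ^ q / s)) ≤ 1 :=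
    exp_le_one_iff.2 (neg_nonpos.2 (div_nonneg (rpow_pos_of_pos hr q).le hs.le))
  rw [norm_mul, norm_of_nonneg hc, norm_of_nonneg (exp_pos _).le]
  exact mul_le_of_le_one_right hc hexp

lemma eLpNorm_mul_exp_neg_rpow_div_withDensity_rpow {c q s w : ℝ} {m : ℝ≥0∞} (hm0 : m ≠ 0)
    (hm : m ≠ ∞) (hc : 0 ≤ c) (hq : 0 < q) (hs : 0 < s) (hw : -1 < w) :
    eLpNorm (fun r => c * exp (-(r ^ q / s))) m
        (((volume : Measure ℝ).restrict (Ioi 0)).withDensity fun r => ENNReal.ofReal (r ^ w)) =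
      ENNReal.ofReal
        (c * ((m.toReal / s) ^ (-(w + 1) / q) * (1 / q) * Gamma ((w + 1) / q)) ^ m.toReal⁻¹) := by
  rw [eLpNorm_eq_lintegral_rpow_enorm_toReal hm0 hm,
    lintegral_withDensity_eq_lintegral_mul _ (by fun_prop) (by fun_prop)]
  set p := m.toReal
  have hp : 0 < p := toReal_pos hm0 hm
  have hpow : ∀ r ∈ Ioi (0 : ℝ), ENNReal.ofReal (r ^ w) * ‖c * exp (-(r ^ q / s))‖ₑ ^ p =
      ENNReal.ofReal (c ^ p * (r ^ w * exp (-(p / s) * r ^ q))) := by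
    intro r hr
    have hnn : 0 ≤ c * exp (-(r ^ q / s)) := by positivity
    rw [enorm_eq_ofReal hnn, ofReal_rpow_of_nonneg hnn hp.le,
      ← ofReal_mul (rpow_pos_of_pos hr w).le, mul_rpow hc (exp_pos _).le, ← exp_mul]
    congr 1
    field_simp
  have hint : IntegrableOn (fun r => c ^ p * (r ^ w * exp (-(p / s) * r ^ q))) (Ioi 0) :=
    (integrableOn_rpow_mul_exp_neg_mul_rpow hw hq (by positivity)).const_mul _
  have hnonneg : 0 ≤ᵐ[volume.restrict (Ioi 0)]
      fun r : ℝ => c ^ p * (r ^ w * exp (-(p / s) * r ^ q)) := by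
    filter_upwards [ae_restrict_mem measurableSet_Ioi] with r hr
    have : 0 < r := hr
    positivity
  have hΓ : 0 < Gamma ((w + 1) / q) := Gamma_pos_of_pos (div_pos (by linarith) hq)
  simp only [Pi.mul_apply]
  rw [setLIntegral_congr_fun measurableSet_Ioi hpow,
    ← ofReal_integral_eq_lintegral_ofReal hint hnonneg,
    integral_const_mul, integral_rpow_mul_exp_neg_mul_rpow hq hw (by positivity),
    ofReal_rpow_of_nonneg (by positivity) (by positivity), one_div p,
    mul_rpow (by positivity) (by positivity), rpow_rpow_inv hc hp.ne']

lemma rpow_mul_scaled_rpow_inv_eq {q t p G : ℝ} (hq : 0 < q) (ht : 0 < t) (hp : 0 < p)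
    (hG : 0 < G) (μ : ℝ) :
    (q * t) ^ (-μ - 1) * ((p / (q ^ 2 * t)) ^ (-(μ + 1)) * (1 / q) * G) ^ p⁻¹ =
      q ^ ((2 * μ + 1) * p⁻¹ - μ - 1) * p ^ (-(μ + 1) * p⁻¹) * G ^ p⁻¹ *
        t ^ ((μ + 1) * (p⁻¹ - 1)) := by
  have hs : Real.log (p / (q ^ 2 * t)) = Real.log p - 2 * Real.log q - Real.log t := by
    rw [log_div hp.ne' (by positivity), log_mul (by positivity) ht.ne', Real.log_pow]
    push_cast
    ring
  have hX : Real.log ((p / (q ^ 2 * t)) ^ (-(μ + 1)) * (1 / q) * G) =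
      -(μ + 1) * (Real.log p - 2 * Real.log q - Real.log t) - Real.log q + Real.log G := by
    rw [log_mul (by positivity) hG.ne', log_mul (by positivity) (by positivity),
      log_rpow (by positivity), hs, one_div, Real.log_inv]
    ring
  refine log_injOn_pos (mem_Ioi.2 (by positivity)) (mem_Ioi.2 (by positivity)) ?_
  rw [log_mul (by positivity) (by positivity), log_rpow (by positivity), log_rpow (by positivity),
    hX, log_mul hq.ne' ht.ne', log_mul (by positivity) (by positivity),
    log_mul (by positivity) (by positivity), log_mul (by positivity) (by positivity),
    log_rpow hq, log_rpow hp, log_rpow hG, log_rpow ht]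
  field_simp
  ring

theorem kernel_Lm_bound_general (n k : ℕ) (β μ : ℝ) (hn : 2 ≤ n) (hβ2 : β < 2)
    (hμ : μ = ((n : ℝ) - 2 + 2 * k) / (2 - β)) (m : ℝ≥0∞) :
    ∀ t : ℝ, 0 < t →
      eLpNorm
        (fun r : ℝ =>
          (((2 - β) * t) ^ (-μ - 1) * Real.exp (-(r ^ (2 - β) / ((2 - β) ^ 2 * t))) *
              r ^ (k : ℝ)) / r ^ (k : ℝ))
        m
        (((volume : Measure ℝ).restrict (Set.Ioi 0)).withDensity
          (fun r => ENNReal.ofReal (r ^ (2 * (k : ℝ) + n - 1 - β))))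
      ≤ ENNReal.ofReal
          ((2 - β) ^ (((4 * (k : ℝ) + 2 * n - β - 2) / (2 - β)) * m⁻¹.toReal - μ - 1) *
            m.toReal ^ (-((2 * (k : ℝ) + n - β) / (2 - β)) * m⁻¹.toReal) *
            Real.Gamma (μ + 1) ^ m⁻¹.toReal *
            t ^ (((2 * (k : ℝ) + n - β) / (2 - β)) * (m⁻¹.toReal - 1))) := by
  intro t ht
  have hq : 0 < 2 - β := by linarith
  have hn' : (2 : ℝ) ≤ n := by exact_mod_cast hn
  have hk : (0 : ℝ) ≤ k := k.cast_nonneg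
  have hw : -1 < 2 * (k : ℝ) + n - 1 - β := by linarith
  have hμ1 : (2 * (k : ℝ) + n - β) / (2 - β) = μ + 1 := by rw [hμ]; field_simp; ring
  have hμ2 : (4 * (k : ℝ) + 2 * n - β - 2) / (2 - β) = 2 * μ + 1 := by rw [hμ]; field_simp; ring
  have hw1 : (2 * (k : ℝ) + n - 1 - β + 1) / (2 - β) = μ + 1 := by rw [← hμ1]; ring_nf
  have hμ0 : 0 < μ + 1 := hμ1 ▸ div_pos (by linarith) hq
  have hc : 0 ≤ ((2 - β) * t) ^ (-μ - 1) := by positivity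
  rw [eLpNorm_congr_ae (g := fun r => ((2 - β) * t) ^ (-μ - 1) *
      exp (-(r ^ (2 - β) / ((2 - β) ^ 2 * t)))) (by
    filter_upwards [ae_pos_withDensity_restrict_Ioi _] with r hr
    exact mul_div_cancel_right₀ _ (rpow_pos_of_pos hr _).ne'), hμ1, hμ2]
  rcases eq_or_ne m 0 with rfl | hm0
  · simp
  rcases eq_or_ne m ∞ with rfl | hm
  · refine (eLpNorm_top_mul_exp_neg_rpow_div_le hc (by positivity) _).trans_eq ?_
    simp only [mul_rpow hq.le ht.le, inv_top, toReal_zero, toReal_top, mul_zero, zero_sub,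
      Real.rpow_zero, mul_one, mul_neg]
    ring_nf
  · rw [eLpNorm_mul_exp_neg_rpow_div_withDensity_rpow hm0 hm hc hq (by positivity) hw,
      neg_div, hw1, toReal_inv,
      rpow_mul_scaled_rpow_inv_eq hq ht (toReal_pos hm0 hm) (Gamma_pos_of_pos hμ0)]

/-- `L^m` bound (w.r.t. the weighted measure `dη(r) = r^{2k+n-1-β}dr` on `(0,∞)`)
for the weighted heat kernel `K_μ(r,t) = ((2-β)t)^{-μ-1} e^{-r^{2-β}/((2-β)²t)} r^k`.
For `m = ∞` the conventions `m^{-c/m} = 1`, `Γ(μ+1)^{1/m} = 1` and exponent of `t`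
equal to `-(2k+n-β)/(2-β)` are realized via `m⁻¹.toReal = 0` and `(0:ℝ)^(0:ℝ) = 1`. -/
theorem kernel_Lm_bound (n k : ℕ) (β μ : ℝ) (hn : 2 ≤ n) (hβ0 : 0 ≤ β) (hβ2 : β < 2)
    (hμ : μ = ((n : ℝ) - 2 + 2 * k) / (2 - β)) (m : ℝ≥0∞) (hm : 1 ≤ m) :
    ∀ t : ℝ, 0 < t →
      eLpNorm
        (fun r : ℝ =>
          (((2 - β) * t) ^ (-μ - 1) * Real.exp (-(r ^ (2 - β) / ((2 - β) ^ 2 * t))) *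
              r ^ (k : ℝ)) / r ^ (k : ℝ))
        m
        (((volume : Measure ℝ).restrict (Set.Ioi 0)).withDensity
          (fun r => ENNReal.ofReal (r ^ (2 * (k : ℝ) + n - 1 - β))))
      ≤ ENNReal.ofReal
          ((2 - β) ^ (((4 * (k : ℝ) + 2 * n - β - 2) / (2 - β)) * m⁻¹.toReal - μ - 1) *
            m.toReal ^ (-((2 * (k : ℝ) + n - β) / (2 - β)) * m⁻¹.toReal) *
            Real.Gamma (μ + 1) ^ m⁻¹.toReal *
            t ^ (((2 * (k : ℝ) + n - β) / (2 - β)) * (m⁻¹.toReal - 1))) :=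
  kernel_Lm_bound_general n k β μ hn hβ2 hμ m
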